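/- arXiv:1511.03898 — 2 statements merged into one kernel-verified Lean document; each statement's English description precedes it below -/
import Mathlib

section
/- For every integer k ≥ 1 and every n ∈ ℕ, the quantity m(n) = (n+1)(n+2)⋯(n+k) − n(n−1)⋯(n−k+1) satisfies m(n) ≥ k!. Moreover, if k ≥ 2 then m(n) ≥ k!·(n+1) for every n ∈ ℕ. -/
noncomputable section

open scoped BigOperators ComplexConjugate

local notation "⟪" x ", " y "⟫" => @inner ℂ _ _ x y

/-- The Hilbert space `H = ℓ²(ℕ, ℂ)` of the quantum harmonic oscillator. -/
abbrev H : Type := lp (fun _ : ℕ => ℂ) 2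

/-- The Fock (number) basis vector `|n⟩`. -/
def fock (n : ℕ) : H := lp.single 2 n 1

/-- Coefficientwise action of the annihilation operator `a`:
`(aψ)_n = √(n+1) ψ_{n+1}`. -/
def acoef (ψ : ℕ → ℂ) : ℕ → ℂ := fun n => (Real.sqrt (n + 1) : ℝ) * ψ (n + 1)

/-- Coefficientwise action of the creation operator `a†`:
`(a†ψ)_n = √n ψ_{n-1}` for `n ≥ 1`, and `(a†ψ)_0 = 0`. -/
def adcoef (ψ : ℕ → ℂ) : ℕ → ℂ :=
  fun n => if n = 0 then 0 else (Real.sqrt n : ℝ) * ψ (n - 1)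

/-- Coefficientwise action of `L = a^k − α^k I`. -/
def Lcoef (k : ℕ) (α : ℝ) (ψ : ℕ → ℂ) : ℕ → ℂ :=
  fun n => acoef^[k] ψ n - (α : ℂ) ^ k * ψ n

/-- Coefficientwise action of `L† = (a†)^k − α^k I`. -/
def Ldcoef (k : ℕ) (α : ℝ) (ψ : ℕ → ℂ) : ℕ → ℂ :=
  fun n => adcoef^[k] ψ n - (α : ℂ) ^ k * ψ n

/-- Coefficientwise action of `L†L`. -/
def LdLcoef (k : ℕ) (α : ℝ) (ψ : ℕ → ℂ) : ℕ → ℂ := Ldcoef k α (Lcoef k α ψ)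

/-- `ψ ∈ H_j`, the domain `{ψ : ∑ n^j |ψ_n|² < ∞}` (inside `ℓ²`). -/
def inHdom (j : ℕ) (ψ : ℕ → ℂ) : Prop :=
  Summable (fun n => ‖ψ n‖ ^ 2) ∧ Summable (fun n : ℕ => (n : ℝ) ^ j * ‖ψ n‖ ^ 2)

/-- Falling factorial `n(n−1)⋯(n−k+1)` (zero when `n < k`). -/
def fallR (k n : ℕ) : ℝ := ∏ j ∈ Finset.range k, ((n : ℝ) - j)

/-- Rising product `(n+1)(n+2)⋯(n+k)`. -/
def riseR (k n : ℕ) : ℝ := ∏ j ∈ Finset.Icc 1 k, ((n : ℝ) + j)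

/-- Eigenvalue `m(n)` of the commutator `M = [a^k, (a†)^k]` on `|n⟩`. -/
def mval (k n : ℕ) : ℝ := riseR k n - fallR k n

/-- The vector `L†|m⟩ = √((m+1)⋯(m+k)) |m+k⟩ − α^k |m⟩`. -/
def ldagFock (k : ℕ) (α : ℝ) (m : ℕ) : H :=
  ((Real.sqrt (riseR k m) : ℝ) : ℂ) • fock (m + k) - ((α : ℂ) ^ k) • fock m

/-- The vector `L†L|m⟩`. -/
def ldlFock (k : ℕ) (α : ℝ) (m : ℕ) : H :=
  ((fallR k m + α ^ (2 * k) : ℝ) : ℂ) • fock m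
    - ((α ^ k * Real.sqrt (fallR k m) : ℝ) : ℂ) • fock (m - k)
    - ((α ^ k * Real.sqrt (riseR k m) : ℝ) : ℂ) • fock (m + k)

/-- A bounded operator is a Hermitian trace-class operator (member of `K¹(H)`) when it is
self-adjoint and admits a spectral decomposition `T = ∑ c_μ |e_μ⟩⟨e_μ|` along a Hilbert basis
with absolutely summable real eigenvalues. -/
def IsHermitianTraceClass (T : H →L[ℂ] H) : Prop :=
  IsSelfAdjoint T ∧
    ∃ (e : HilbertBasis ℕ ℂ H) (c : ℕ → ℝ),
      Summable (fun μ => |c μ|) ∧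
      ∀ x : H, T x = ∑' μ, ((c μ : ℂ) * ⟪e μ, x⟫) • e μ

/-- Trace norm `tr|T| = ∑ |c_μ|` of a Hermitian trace-class operator. -/
def traceNorm (T : H →L[ℂ] H) : ℝ :=
  sInf {s | ∃ (e : HilbertBasis ℕ ℂ H) (c : ℕ → ℝ),
    Summable (fun μ => |c μ|) ∧
    (∀ x : H, T x = ∑' μ, ((c μ : ℂ) * ⟪e μ, x⟫) • e μ) ∧
    s = ∑' μ, |c μ|}

/-- Trace of an operator, computed in the Fock basis. -/
def traceOf (T : H →L[ℂ] H) : ℝ := ∑' n, (⟪fock n, T (fock n)⟫).re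

/-- Positive semidefinite bounded operator. -/
def IsPosSemidef (T : H →L[ℂ] H) : Prop :=
  IsSelfAdjoint T ∧ ∀ x : H, 0 ≤ (⟪x, T x⟫).re

/-- Loewner order on Hermitian operators. -/
def opLE (A B : H →L[ℂ] H) : Prop := IsPosSemidef (B - A)

/-- `(g, d)` is a spectral decomposition of `L†L`: a Hilbert basis of eigenvectors `g_μ`,
lying in the domain `H_{2k}`, with nonnegative eigenvalues `d_μ`. -/
def IsSpectralBasis (k : ℕ) (α : ℝ) (g : HilbertBasis ℕ ℂ H) (d : ℕ → ℝ) : Prop :=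
  (∀ μ, 0 ≤ d μ) ∧
    ∀ μ, inHdom (2 * k) (g μ) ∧
      ∀ n, LdLcoef k α (g μ) n = (d μ : ℂ) * (g μ) n

/-- Matrix entry `⟨g_μ| SρS |g_ν⟩ = √(1+d_μ)√(1+d_ν) ⟨g_μ|ρ|g_ν⟩` of `SρS`
in the eigenbasis `g` of `L†L`, where `S = √(I + L†L)`. -/
def SEntry (g : HilbertBasis ℕ ℂ H) (d : ℕ → ℝ) (ρ : H →L[ℂ] H) (μ ν : ℕ) : ℂ :=
  ((Real.sqrt (1 + d μ) * Real.sqrt (1 + d ν) : ℝ) : ℂ) * ⟪g μ, ρ (g ν)⟫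

/-- Membership in `K_L(H) = {ρ ∈ K¹(H) : tr|SρS| < ∞}`: `ρ` is Hermitian trace class and the
operator with matrix `SρS` is Hermitian trace class. -/
def memKL (g : HilbertBasis ℕ ℂ H) (d : ℕ → ℝ) (ρ : H →L[ℂ] H) : Prop :=
  IsHermitianTraceClass ρ ∧
    ∃ T : H →L[ℂ] H, IsHermitianTraceClass T ∧
      ∀ μ ν, ⟪g μ, T (g ν)⟫ = SEntry g d ρ μ ν

/-- The norm `‖ρ‖_L = tr|SρS|` on `K_L(H)`. -/
def Lnorm (g : HilbertBasis ℕ ℂ H) (d : ℕ → ℝ) (ρ : H →L[ℂ] H) : ℝ :=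
  sInf {s | ∃ T : H →L[ℂ] H, IsHermitianTraceClass T ∧
    (∀ μ ν, ⟪g μ, T (g ν)⟫ = SEntry g d ρ μ ν) ∧ s = traceNorm T}

/-- Fock-basis matrix entry `⟨m| 𝔄(ρ) |n⟩` of
`𝔄(ρ) = (L†Lρ + ρL†L)/2 − LρL†` (weak formulation). -/
def Amat (k : ℕ) (α : ℝ) (ρ : H →L[ℂ] H) (m n : ℕ) : ℂ :=
  (1 / 2 : ℂ) * (⟪ldlFock k α m, ρ (fock n)⟫ + ⟪fock m, ρ (ldlFock k α n)⟫)
    - ⟪ldagFock k α m, ρ (ldagFock k α n)⟫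

/-- `ρ` belongs to the domain of the superoperator `𝔄` on `K_L(H)`, with value `A = 𝔄(ρ)`. -/
def inDomA (k : ℕ) (α : ℝ) (g : HilbertBasis ℕ ℂ H) (d : ℕ → ℝ)
    (ρ A : H →L[ℂ] H) : Prop :=
  memKL g d ρ ∧ memKL g d A ∧ ∀ m n, ⟪fock m, A (fock n)⟫ = Amat k α ρ m n

/-- `(ρ, A)` is a `C¹` trajectory of the Lindblad master equation `dρ/dt = −𝔄(ρ)` in `K_L(H)`:
`ρ(t)` lies in the domain of `𝔄` with `A(t) = 𝔄(ρ(t))`, the derivative of `ρ` in the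
`‖·‖_L`-norm equals `−A(t)`, and `t ↦ A(t)` is `‖·‖_L`-continuous. -/
def IsLindbladTrajectory (k : ℕ) (α : ℝ) (g : HilbertBasis ℕ ℂ H) (d : ℕ → ℝ)
    (ρ A : ℝ → (H →L[ℂ] H)) : Prop :=
  (∀ t, 0 ≤ t → inDomA k α g d (ρ t) (A t)) ∧
  (∀ t, 0 ≤ t → Filter.Tendsto
      (fun h : ℝ => Lnorm g d (((1 / h : ℝ) : ℂ) • (ρ (t + h) - ρ t) + A t))
      (nhdsWithin 0 {h : ℝ | h ≠ 0 ∧ 0 ≤ t + h}) (nhds 0)) ∧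
  (∀ t, 0 ≤ t → Filter.Tendsto (fun s => Lnorm g d (A s - A t))
      (nhdsWithin t (Set.Ici 0)) (nhds 0))

/-- The coherent state amplitude `α_m = α e^{2iπm/k}` for `m = 1, …, k` (indexed by `Fin k`). -/
def catAmp (k : ℕ) (α : ℝ) (m : Fin k) : ℂ :=
  (α : ℂ) * Complex.exp (2 * Real.pi * Complex.I * (m.1 + 1) / k)

/-- Coefficients `e^{−|β|²/2} βⁿ/√(n!)` of the coherent state `|β⟩`. -/
def cohCoeff (β : ℂ) : ℕ → ℂ :=
  fun n => ((Real.exp (-‖β‖ ^ 2 / 2) : ℝ) : ℂ) * β ^ n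
    / ((Real.sqrt (n.factorial) : ℝ) : ℂ)

open Classical in
/-- The coherent state `|β⟩ ∈ H`. -/
def coh (β : ℂ) : H :=
  if h : Memℓp (cohCoeff β) 2 then (⟨cohCoeff β, h⟩ : H) else 0

/-- The `k`-dimensional subspace `H_{α,k}` spanned by the coherent states `|α_m⟩`. -/
def catSpan (k : ℕ) (α : ℝ) : Submodule ℂ H :=
  Submodule.span ℂ (Set.range fun m : Fin k => coh (catAmp k α m))

/-- The rank-one operator `|m⟩⟨n|`. -/
def ketbra (m n : ℕ) : H →L[ℂ] H := (innerSL ℂ (fock n)).smulRight (fock m)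

/-- Coefficientwise action of `(a†)^k + a^k`. -/
def xcoef (k : ℕ) (ψ : ℕ → ℂ) : ℕ → ℂ :=
  fun n => adcoef^[k] ψ n + acoef^[k] ψ n

/-- Coefficientwise action of the inverse resolvent
`R_λ^{-1} = (I + λ(N(N−1)⋯(N−k+1) + α^{2k}))^{-1}`. -/
def rinvCoeff (k : ℕ) (α l : ℝ) (ψ : ℕ → ℂ) : ℕ → ℂ :=
  fun n => (((1 + l * (fallR k n + α ^ (2 * k)))⁻¹ : ℝ) : ℂ) * ψ n

/-- Diagonal Fock-matrix entry `⟨n| 𝔏_L(ξ) |n⟩` of the Lindblad generator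
`𝔏_L(ξ) = LξL† − ½L†Lξ − ½ξL†L` (weak formulation). -/
def lindDiag (k : ℕ) (α : ℝ) (ξ : H →L[ℂ] H) (n : ℕ) : ℂ :=
  ⟪ldagFock k α n, ξ (ldagFock k α n)⟫
    - (1 / 2 : ℂ) * ⟪ldlFock k α n, ξ (fock n)⟫
    - (1 / 2 : ℂ) * ⟪fock n, ξ (ldlFock k α n)⟫

/-- The (unnormalized) `k`-legged Schrödinger cat state
`v_ℓ = ∑_{m=1}^k e^{2iπℓm/k} |α_m⟩`. -/
def catVec (k : ℕ) (α : ℝ) (l : ℤ) : H :=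
  ∑ m ∈ Finset.Icc 1 k,
    Complex.exp (2 * Real.pi * Complex.I * l * m / k) •
      coh ((α : ℂ) * Complex.exp (2 * Real.pi * Complex.I * m / k))

/-- The vector `(I + λL†L)/2 |m⟩`. -/
def resFock (k : ℕ) (α l : ℝ) (m : ℕ) : H :=
  (1 / 2 : ℂ) • (fock m + ((l : ℝ) : ℂ) • ldlFock k α m)

/-- Weak (matrix-element) formulation of the Sylvester-type equation
`((I+λL†L)/2)ρ + ρ((I+λL†L)/2) = f + rλ LρL†`. -/
def sylvEq (k : ℕ) (α l r : ℝ) (f ρ : H →L[ℂ] H) : Prop :=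
  ∀ m n, ⟪resFock k α l m, ρ (fock n)⟫ + ⟪fock m, ρ (resFock k α l n)⟫
    = ⟪fock m, f (fock n)⟫ + ((r * l : ℝ) : ℂ) * ⟪ldagFock k α m, ρ (ldagFock k α n)⟫

/-- `m(n)` as an integer: `(n+1)(n+2)⋯(n+k) − n(n−1)⋯(n−k+1)`. -/
def mInt (k n : ℕ) : ℤ :=
  (∏ j ∈ Finset.Icc 1 k, ((n : ℤ) + j)) - ∏ j ∈ Finset.range k, ((n : ℤ) - j)

/-! The two products are `k! C(n+k,k)` and `k! C(n,k)`, so `m(n) = k! (C(n+k,k) − C(n,k))`.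
Pascal's rule `C(n+k,k) = C(n+k−1,k−1) + C(n+k−1,k)` together with `C(n,k) ≤ C(n+k−1,k)` gives
`m(n) ≥ k! C(n+k−1,k−1)`, and `C(n+k−1,k−1)` is at least `1`, and at least `C(n+1,1) = n+1`
once `k ≥ 2`. -/

theorem prod_Icc_natCast_add_eq_ascFactorial {R : Type*} [CommSemiring R] (n k : ℕ) :
    ∏ j ∈ Finset.Icc 1 k, ((n : R) + j) = ((n + 1).ascFactorial k : R) := by
  rw [← Finset.Ico_add_one_right_eq_Icc, Finset.prod_Ico_eq_prod_range,
    Nat.ascFactorial_eq_prod_range]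
  push_cast
  simp only [add_assoc]

theorem prod_range_natCast_sub_eq_descFactorial {R : Type*} [CommRing R] (n k : ℕ) :
    ∏ j ∈ Finset.range k, ((n : R) - j) = (n.descFactorial k : R) := by
  rw [← descPochhammer_eval_eq_prod_range, descPochhammer_eval_eq_descFactorial]

theorem mInt_eq_factorial_mul (k n : ℕ) :
    mInt k n = k.factorial * (((n + k).choose k : ℤ) - n.choose k) := by
  rw [mInt, prod_Icc_natCast_add_eq_ascFactorial, prod_range_natCast_sub_eq_descFactorial,
    Nat.ascFactorial_eq_factorial_mul_choose, Nat.descFactorial_eq_factorial_mul_choose]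
  push_cast
  ring

theorem Nat.add_choose_add_choose_succ_le (n j : ℕ) :
    (n + j).choose j + n.choose (j + 1) ≤ (n + j + 1).choose (j + 1) := by
  rw [Nat.choose_succ_succ]
  exact Nat.add_le_add_left (Nat.choose_le_choose _ (Nat.le_add_right n j)) _

theorem Nat.succ_le_add_choose (n : ℕ) {j : ℕ} (hj : 1 ≤ j) : n + 1 ≤ (n + j).choose j := by
  calc n + 1 = (n + 1).choose n := by rw [Nat.choose_symm_add, Nat.choose_one_right]
    _ ≤ (n + j).choose n := Nat.choose_le_choose n (by omega)
    _ = (n + j).choose j := Nat.choose_symm_add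

theorem factorial_mul_add_choose_le_mInt (n j : ℕ) :
    ((j + 1).factorial : ℤ) * (n + j).choose j ≤ mInt (j + 1) n := by
  rw [mInt_eq_factorial_mul, ← add_assoc]
  have := Nat.add_choose_add_choose_succ_le n j
  gcongr
  omega

/-- For every `k ≥ 1` and `n ∈ ℕ`,
`m(n) = (n+1)⋯(n+k) − n(n−1)⋯(n−k+1) ≥ k!`; and if `k ≥ 2` then `m(n) ≥ k!(n+1)`. -/
theorem mval_lower_bounds (k : ℕ) (hk : 1 ≤ k) :
    (∀ n : ℕ, (k.factorial : ℤ) ≤ mInt k n) ∧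
    (2 ≤ k → ∀ n : ℕ, (k.factorial : ℤ) * ((n : ℤ) + 1) ≤ mInt k n) := by
  obtain ⟨j, rfl⟩ : ∃ j, k = j + 1 := ⟨k - 1, by omega⟩
  refine ⟨fun n => ?_, fun hk2 n => ?_⟩
  · calc ((j + 1).factorial : ℤ) = (j + 1).factorial * 1 := (mul_one _).symm
      _ ≤ (j + 1).factorial * (n + j).choose j := by
          gcongr; exact_mod_cast Nat.choose_pos (Nat.le_add_left j n)
      _ ≤ mInt (j + 1) n := factorial_mul_add_choose_le_mInt n j
  · calc ((j + 1).factorial : ℤ) * (n + 1) ≤ (j + 1).factorial * (n + j).choose j := by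
          gcongr; exact_mod_cast Nat.succ_le_add_choose n (by omega)
      _ ≤ mInt (j + 1) n := factorial_mul_add_choose_le_mInt n j

end
end

section
/- For every integer k ≥ 1 and every finitely supported ψ = ∑_n ψ_n|n⟩ ∈ ℓ²(ℕ,ℂ), one has ⟨ψ|((a†)^k + a^k)²|ψ⟩ = ‖((a†)^k + a^k)ψ‖² ≤ 2 ∑_{n≥0} ((n+k)^k + n^k) |ψ_n|². -/
noncomputable section

open scoped BigOperators ComplexConjugate

local notation "⟪" x ", " y "⟫" => @inner ℂ _ _ x y

/-! In the Fock basis `a^k` and `(a†)^k` are weighted shifts by `k` carrying the same weights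
`√((n+1)⋯(n+k))`, so they are adjoint to each other and `X = (a†)^k + a^k` is symmetric on
finitely supported vectors; this gives `⟨ψ, X²ψ⟩ = ‖Xψ‖²`. For the bound,
`‖Xψ‖² ≤ 2(‖(a†)^kψ‖² + ‖a^kψ‖²)`, where `‖(a†)^kψ‖² = ∑ (n+1)⋯(n+k)|ψ_n|²` and
`‖a^kψ‖² = ∑ (n+1)⋯(n+k)|ψ_{n+k}|²`, and each weight `(n+1)⋯(n+k)` is at most `(n+k)^k`. -/

open Function

lemma summable_apply_of_support_finite {ι β α : Type*} [Zero β] [AddCommMonoid α]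
    [TopologicalSpace α] {ψ : ι → β} (hψ : ψ.support.Finite) (F : ι → β → α)
    (hF : ∀ i, F i 0 = 0) : Summable fun i => F i (ψ i) :=
  summable_of_hasFiniteSupport <| hψ.subset fun i hi h0 => hi (by simp only [h0, hF])

lemma norm_ofReal_sqrt_mul_sq {r : ℝ} (hr : 0 ≤ r) (z : ℂ) :
    ‖((Real.sqrt r : ℝ) : ℂ) * z‖ ^ 2 = r * ‖z‖ ^ 2 := by
  rw [norm_mul, mul_pow, Complex.norm_real, Real.norm_eq_abs, sq_abs, Real.sq_sqrt hr]

lemma riseR_nonneg (k n : ℕ) : 0 ≤ riseR k n :=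
  Finset.prod_nonneg fun _ _ => by positivity

lemma riseR_succ (k n : ℕ) : riseR (k + 1) n = riseR k n * ((n : ℝ) + (k + 1)) := by
  rw [riseR, Finset.prod_Icc_succ_top (Nat.le_add_left 1 k), ← riseR]
  push_cast
  ring

lemma riseR_succ' (k n : ℕ) : riseR (k + 1) n = ((n : ℝ) + 1) * riseR k (n + 1) := by
  induction k with
  | zero => simp [riseR]
  | succ k ih =>
    rw [riseR_succ, ih, riseR_succ]
    push_cast
    ring

lemma riseR_le_pow (k n : ℕ) : riseR k n ≤ ((n : ℝ) + k) ^ k := by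
  calc riseR k n ≤ ∏ _j ∈ Finset.Icc 1 k, ((n : ℝ) + k) :=
        Finset.prod_le_prod (fun _ _ => by positivity) fun j hj => by
          have : (j : ℝ) ≤ k := by exact_mod_cast (Finset.mem_Icc.mp hj).2
          linarith
    _ = ((n : ℝ) + k) ^ k := by simp

section Ladder

variable (k : ℕ) (ψ : ℕ → ℂ)

lemma acoef_iterate_apply (n : ℕ) :
    acoef^[k] ψ n = ((Real.sqrt (riseR k n) : ℝ) : ℂ) * ψ (n + k) := by
  induction k generalizing n with
  | zero => simp [riseR]
  | succ k ih =>
    rw [iterate_succ_apply', acoef, ih, riseR_succ', Real.sqrt_mul (by positivity),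
      ← add_assoc, add_right_comm]
    push_cast
    ring

lemma adcoef_iterate_apply_add (m : ℕ) :
    adcoef^[k] ψ (m + k) = ((Real.sqrt (riseR k m) : ℝ) : ℂ) * ψ m := by
  induction k with
  | zero => simp [riseR]
  | succ k ih =>
    rw [← add_assoc, iterate_succ_apply', adcoef, if_neg (Nat.succ_ne_zero _),
      Nat.add_sub_cancel, ih, riseR_succ, Real.sqrt_mul (riseR_nonneg k m)]
    push_cast [add_assoc]
    ring

lemma adcoef_iterate_apply_of_lt {n : ℕ} (hn : n < k) : adcoef^[k] ψ n = 0 := by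
  induction k generalizing n with
  | zero => omega
  | succ k ih =>
    rw [iterate_succ_apply', adcoef]
    split_ifs with h0
    · rfl
    · rw [ih (by omega), mul_zero]

lemma support_adcoef_iterate_subset : (adcoef^[k] ψ).support ⊆ Set.range (· + k) := by
  intro n hn
  by_contra hnk
  refine hn (adcoef_iterate_apply_of_lt k ψ ?_)
  by_contra hkn
  exact hnk ⟨n - k, Nat.sub_add_cancel (not_lt.mp hkn)⟩

/-- No summability is needed: the support of the left-hand side lies in the range of the
injection `m ↦ m + k`. -/
lemma tsum_apply_adcoef_iterate {α : Type*} [AddCommMonoid α] [TopologicalSpace α]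
    (F : ℕ → ℂ → α) (hF : ∀ n, F n 0 = 0) :
    ∑' n, F n (adcoef^[k] ψ n) = ∑' m, F (m + k) (((Real.sqrt (riseR k m) : ℝ) : ℂ) * ψ m) := by
  have hsupp : support (fun n => F n (adcoef^[k] ψ n)) ⊆ Set.range (· + k) :=
    fun n hn => support_adcoef_iterate_subset k ψ fun h0 => hn (by simp only [h0, hF])
  rw [← (add_left_injective k).tsum_eq hsupp]
  simp only [adcoef_iterate_apply_add]

lemma tsum_norm_sq_adcoef_iterate :
    ∑' n, ‖adcoef^[k] ψ n‖ ^ 2 = ∑' m, riseR k m * ‖ψ m‖ ^ 2 :=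
  (tsum_apply_adcoef_iterate k ψ (fun _ z => ‖z‖ ^ 2) (by simp)).trans <|
    tsum_congr fun m => norm_ofReal_sqrt_mul_sq (riseR_nonneg k m) (ψ m)

lemma norm_sq_acoef_iterate_apply (n : ℕ) :
    ‖acoef^[k] ψ n‖ ^ 2 = riseR k n * ‖ψ (n + k)‖ ^ 2 := by
  rw [acoef_iterate_apply, norm_ofReal_sqrt_mul_sq (riseR_nonneg k n)]

lemma tsum_conj_mul_adcoef_iterate (φ : ℕ → ℂ) :
    ∑' n, conj (ψ n) * adcoef^[k] φ n = ∑' n, conj (acoef^[k] ψ n) * φ n :=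
  (tsum_apply_adcoef_iterate k φ (fun n z => conj (ψ n) * z) fun _ => mul_zero _).trans <|
    tsum_congr fun m => by
      rw [acoef_iterate_apply, map_mul, Complex.conj_ofReal]
      ring

lemma tsum_conj_mul_acoef_iterate (φ : ℕ → ℂ) :
    ∑' n, conj (ψ n) * acoef^[k] φ n = ∑' n, conj (adcoef^[k] ψ n) * φ n :=
  Eq.symm <| (tsum_apply_adcoef_iterate k ψ (fun n z => conj z * φ n) (by simp)).trans <|
    tsum_congr fun m => by
      rw [acoef_iterate_apply, map_mul, Complex.conj_ofReal]
      ring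

variable {ψ}

lemma acoef_iterate_support_finite (hψ : ψ.support.Finite) :
    (acoef^[k] ψ).support.Finite :=
  (hψ.preimage (add_left_injective k).injOn).subset fun n hn h0 =>
    hn (by rw [acoef_iterate_apply, h0, mul_zero])

lemma adcoef_iterate_support_finite (hψ : ψ.support.Finite) :
    (adcoef^[k] ψ).support.Finite := by
  refine (hψ.image (· + k)).subset fun n hn => ?_
  obtain ⟨m, rfl⟩ := support_adcoef_iterate_subset k ψ hn
  refine ⟨m, fun h0 => hn ?_, rfl⟩
  rw [adcoef_iterate_apply_add, h0, mul_zero]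

lemma summable_mul_norm_sq (c : ℕ → ℝ) (hψ : ψ.support.Finite) :
    Summable fun n => c n * ‖ψ n‖ ^ 2 :=
  summable_apply_of_support_finite hψ (fun n z => c n * ‖z‖ ^ 2) (by simp)

lemma summable_norm_sq (hψ : ψ.support.Finite) : Summable fun n => ‖ψ n‖ ^ 2 :=
  summable_apply_of_support_finite hψ (fun _ z => ‖z‖ ^ 2) (by simp)

lemma summable_conj_mul (hψ : ψ.support.Finite) (φ : ℕ → ℂ) :
    Summable fun n => conj (ψ n) * φ n :=
  summable_apply_of_support_finite hψ (fun n z => conj z * φ n) (by simp)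

lemma tsum_conj_mul_xcoef (hψ : ψ.support.Finite) (φ : ℕ → ℂ) :
    ∑' n, conj (ψ n) * xcoef k φ n = ∑' n, conj (xcoef k ψ n) * φ n := by
  simp only [xcoef, mul_add, map_add, add_mul]
  rw [(summable_conj_mul hψ _).tsum_add (summable_conj_mul hψ _),
    (summable_conj_mul (adcoef_iterate_support_finite k hψ) _).tsum_add
      (summable_conj_mul (acoef_iterate_support_finite k hψ) _),
    tsum_conj_mul_adcoef_iterate, tsum_conj_mul_acoef_iterate, add_comm]

lemma tsum_norm_sq_adcoef_iterate_le (hψ : ψ.support.Finite) :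
    ∑' n, ‖adcoef^[k] ψ n‖ ^ 2 ≤ ∑' n : ℕ, ((n : ℝ) + k) ^ k * ‖ψ n‖ ^ 2 := by
  rw [tsum_norm_sq_adcoef_iterate]
  refine Summable.tsum_le_tsum (fun n => ?_) (summable_mul_norm_sq _ hψ)
    (summable_mul_norm_sq _ hψ)
  gcongr
  exact riseR_le_pow k n

lemma tsum_norm_sq_acoef_iterate_le (hψ : ψ.support.Finite) :
    ∑' n, ‖acoef^[k] ψ n‖ ^ 2 ≤ ∑' n : ℕ, (n : ℝ) ^ k * ‖ψ n‖ ^ 2 := by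
  refine Summable.tsum_le_tsum_of_inj (· + k) (add_left_injective k)
    (fun _ _ => by positivity) (fun n => ?_)
    (summable_norm_sq (acoef_iterate_support_finite k hψ))
    (summable_mul_norm_sq _ hψ)
  rw [norm_sq_acoef_iterate_apply, Nat.cast_add]
  gcongr
  exact riseR_le_pow k n

lemma tsum_norm_sq_xcoef_le (hψ : ψ.support.Finite) :
    ∑' n, ‖xcoef k ψ n‖ ^ 2 ≤ 2 * (∑' n, ‖adcoef^[k] ψ n‖ ^ 2 + ∑' n, ‖acoef^[k] ψ n‖ ^ 2) := by
  have had := summable_norm_sq (adcoef_iterate_support_finite k hψ)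
  have hac := summable_norm_sq (acoef_iterate_support_finite k hψ)
  have hpt : ∀ n, ‖xcoef k ψ n‖ ^ 2 ≤ 2 * (‖adcoef^[k] ψ n‖ ^ 2 + ‖acoef^[k] ψ n‖ ^ 2) :=
    fun n => (pow_le_pow_left₀ (norm_nonneg _) (norm_add_le _ _) 2).trans (add_sq_le ..)
  have hbound := (had.add hac).mul_left 2
  rw [← had.tsum_add hac, ← tsum_mul_left]
  exact Summable.tsum_le_tsum hpt (.of_nonneg_of_le (fun _ => by positivity) hpt hbound) hbound

end Ladder

theorem xop_squared_bound_general (k : ℕ)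
    (ψ : ℕ → ℂ) (hψ : (Function.support ψ).Finite) :
    ((∑' n, (starRingEnd ℂ) (ψ n) * xcoef k (xcoef k ψ) n)
      = ((∑' n, ‖xcoef k ψ n‖ ^ 2 : ℝ) : ℂ)) ∧
    ((∑' n, ‖xcoef k ψ n‖ ^ 2)
      ≤ 2 * ∑' n : ℕ, (((n : ℝ) + k) ^ k + (n : ℝ) ^ k) * ‖ψ n‖ ^ 2) := by
  refine ⟨?_, ?_⟩
  · rw [tsum_conj_mul_xcoef k hψ, Complex.ofReal_tsum]
    push_cast
    exact tsum_congr fun n => Complex.conj_mul' _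
  · calc ∑' n, ‖xcoef k ψ n‖ ^ 2
        ≤ 2 * (∑' n, ‖adcoef^[k] ψ n‖ ^ 2 + ∑' n, ‖acoef^[k] ψ n‖ ^ 2) :=
          tsum_norm_sq_xcoef_le k hψ
      _ ≤ 2 * (∑' n : ℕ, ((n : ℝ) + k) ^ k * ‖ψ n‖ ^ 2
            + ∑' n : ℕ, (n : ℝ) ^ k * ‖ψ n‖ ^ 2) :=
          mul_le_mul_of_nonneg_left (add_le_add (tsum_norm_sq_adcoef_iterate_le k hψ)
            (tsum_norm_sq_acoef_iterate_le k hψ)) zero_le_two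
      _ = 2 * ∑' n : ℕ, (((n : ℝ) + k) ^ k + (n : ℝ) ^ k) * ‖ψ n‖ ^ 2 := by
          rw [← (summable_mul_norm_sq _ hψ).tsum_add (summable_mul_norm_sq _ hψ)]
          simp only [add_mul]

/-- For finitely supported `ψ`,
`⟨ψ|((a†)^k + a^k)²|ψ⟩ = ‖((a†)^k + a^k)ψ‖² ≤ 2 ∑ ((n+k)^k + n^k)|ψ_n|²`. -/
theorem xop_squared_bound (k : ℕ) (hk : 1 ≤ k)
    (ψ : ℕ → ℂ) (hψ : (Function.support ψ).Finite) :
    ((∑' n, (starRingEnd ℂ) (ψ n) * xcoef k (xcoef k ψ) n)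
      = ((∑' n, ‖xcoef k ψ n‖ ^ 2 : ℝ) : ℂ)) ∧
    ((∑' n, ‖xcoef k ψ n‖ ^ 2)
      ≤ 2 * ∑' n : ℕ, (((n : ℝ) + k) ^ k + (n : ℝ) ^ k) * ‖ψ n‖ ^ 2) :=
  xop_squared_bound_general k ψ hψ
end
end
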